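/- arXiv:1602.05066 — 3 statements merged into one kernel-verified Lean document; each statement's English description precedes it below -/
import Mathlib

section
/- Let E be a Hilbert space, T > 0, and F = L²([0,2T]; E). For 0 ≤ a < b ≤ 2T let F^{[a,b]} denote the subspace of functions supported in [a,b], and let F₊, F₋ denote the subspaces of functions even, respectively odd, with respect to reflection about t = T. If a bounded operator N : F → F satisfies N F₊ ⊆ F₊, N F₋ ⊆ F₋, and N F^{[a,2T]} ⊆ F^{[a,2T]} for all 0 ≤ a ≤ 2T, then N is local: N F^{[a,b]} ⊆ F^{[a,b]} for all 0 ≤ a < b ≤ 2T. -/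
open MeasureTheory Set

/-- Lemma 4 of the paper. If a bounded operator `N` on
`F = L²([0,2T]; E)` preserves the even and odd subspaces (w.r.t. the
reflection `t ↦ 2T - t`) and preserves each subspace `F^{[a,2T]}` of
functions supported in `[a,2T]`, then `N` is local: it preserves every
subspace `F^{[a,b]}` of functions supported in `[a,b]`. -/
theorem stmt_0 {E : Type*} [NormedAddCommGroup E] [InnerProductSpace ℝ E] [CompleteSpace E]
    (T : ℝ) (hT : 0 < T)
    (μ : Measure ℝ) (hμ : μ = volume.restrict (Icc (0:ℝ) (2*T)))
    (N : Lp E 2 μ →L[ℝ] Lp E 2 μ)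
    (heven : ∀ f : Lp E 2 μ, (∀ᵐ t ∂μ, f (2*T - t) = f t) →
      (∀ᵐ t ∂μ, (N f) (2*T - t) = (N f) t))
    (hodd : ∀ f : Lp E 2 μ, (∀ᵐ t ∂μ, f (2*T - t) = - f t) →
      (∀ᵐ t ∂μ, (N f) (2*T - t) = - (N f) t))
    (hsupp : ∀ a : ℝ, 0 ≤ a → a ≤ 2*T → ∀ f : Lp E 2 μ,
      (∀ᵐ t ∂μ, t ∉ Icc a (2*T) → f t = 0) →
      (∀ᵐ t ∂μ, t ∉ Icc a (2*T) → (N f) t = 0)) :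
    ∀ a b : ℝ, 0 ≤ a → a < b → b ≤ 2*T → ∀ f : Lp E 2 μ,
      (∀ᵐ t ∂μ, t ∉ Icc a b → f t = 0) →
      (∀ᵐ t ∂μ, t ∉ Icc a b → (N f) t = 0) := by
  intro a b ha hab hb f hf
  -- the reflection
  set r : ℝ → ℝ := fun t => 2*T - t with hrdef
  have hrr : ∀ t, r (r t) = t := fun t => by simp [hrdef]
  have hr : MeasurePreserving r μ μ := by
    have hmr : Measurable r := measurable_const.sub measurable_id
    refine ⟨hmr, ?_⟩
    rw [hμ]
    have hpre : r ⁻¹' (Icc (0:ℝ) (2*T)) = Icc (0:ℝ) (2*T) := by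
      ext t
      simp only [mem_preimage, mem_Icc, hrdef]
      constructor <;> rintro ⟨h1, h2⟩ <;> constructor <;> linarith
    have hvol : Measure.map r volume = volume :=
      (Measure.measurePreserving_sub_left volume (2*T)).map_eq
    calc Measure.map r (volume.restrict (Icc (0:ℝ) (2*T)))
        = Measure.map r (volume.restrict (r ⁻¹' (Icc (0:ℝ) (2*T)))) := by rw [hpre]
      _ = (Measure.map r volume).restrict (Icc (0:ℝ) (2*T)) :=
          (Measure.restrict_map hmr measurableSet_Icc).symm
      _ = volume.restrict (Icc (0:ℝ) (2*T)) := by rw [hvol]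
  have pull : ∀ {p : ℝ → Prop}, (∀ᵐ t ∂μ, p t) → (∀ᵐ t ∂μ, p (r t)) :=
    fun hp => hr.quasiMeasurePreserving.ae hp
  -- the reflected function
  set h : Lp E 2 μ := Lp.compMeasurePreserving r hr f with hhdef
  have hco : ⇑h =ᵐ[μ] fun t => f (r t) := Lp.coeFn_compMeasurePreserving f hr
  -- support of h
  have h_supp : ∀ᵐ t ∂μ, t ∉ Icc (2*T - b) (2*T - a) → h t = 0 := by
    filter_upwards [hco, pull hf] with t h1 h2 ht
    rw [h1]
    refine h2 ?_
    simp only [mem_Icc, hrdef] at ht ⊢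
    intro ⟨ha', hb'⟩
    exact ht ⟨by linarith, by linarith⟩
  -- even and odd parts
  have hcu : ⇑(f + h) =ᵐ[μ] fun t => f t + f (r t) := by
    filter_upwards [Lp.coeFn_add f h, hco] with t h1 h2
    rw [h1, Pi.add_apply, h2]
  have hcv : ⇑(f - h) =ᵐ[μ] fun t => f t - f (r t) := by
    filter_upwards [Lp.coeFn_sub f h, hco] with t h1 h2
    rw [h1, Pi.sub_apply, h2]
  have hu_even : ∀ᵐ t ∂μ, (f + h) (2*T - t) = (f + h) t := by
    filter_upwards [hcu, pull hcu] with t h1 h2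
    show (f + h) (r t) = (f + h) t
    rw [h1, h2, hrr]
    abel
  have hv_odd : ∀ᵐ t ∂μ, (f - h) (2*T - t) = - (f - h) t := by
    filter_upwards [hcv, pull hcv] with t h1 h2
    show (f - h) (r t) = - (f - h) t
    rw [h1, h2, hrr]
    abel
  have hNu_even := heven (f + h) hu_even
  have hNv_odd := hodd (f - h) hv_odd
  -- support hypotheses transported by N
  have hNf_supp : ∀ᵐ t ∂μ, t ∉ Icc a (2*T) → (N f) t = 0 := by
    refine hsupp a ha (by linarith) f ?_
    filter_upwards [hf] with t h1 ht
    refine h1 ?_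
    simp only [mem_Icc] at ht ⊢
    intro ⟨h2, h3⟩
    exact ht ⟨h2, by linarith⟩
  have hNh_supp : ∀ᵐ t ∂μ, t ∉ Icc (2*T - b) (2*T) → (N h) t = 0 := by
    refine hsupp (2*T - b) (by linarith) (by linarith) h ?_
    filter_upwards [h_supp] with t h1 ht
    refine h1 ?_
    simp only [mem_Icc] at ht ⊢
    intro ⟨h2, h3⟩
    exact ht ⟨h2, by linarith⟩
  -- linearity identities
  have hNu : ⇑(N (f + h)) =ᵐ[μ] fun t => (N f) t + (N h) t := by
    have : N (f + h) = N f + N h := map_add N f h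
    rw [this]
    filter_upwards [Lp.coeFn_add (N f) (N h)] with t h1
    rw [h1, Pi.add_apply]
  have hNv : ⇑(N (f - h)) =ᵐ[μ] fun t => (N f) t - (N h) t := by
    have : N (f - h) = N f - N h := map_sub N f h
    rw [this]
    filter_upwards [Lp.coeFn_sub (N f) (N h)] with t h1
    rw [h1, Pi.sub_apply]
  -- the key identity: (N f) ∘ r = N h a.e.
  have key : ∀ᵐ t ∂μ, (N f) (r t) = (N h) t := by
    filter_upwards [hNu, hNv, pull hNu, pull hNv, hNu_even, hNv_odd]
      with t h1 h2 h3 h4 h5 h6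
    have e1 : (N f) (r t) + (N h) (r t) = (N f) t + (N h) t := by
      rw [← h3, ← h1]; exact h5
    have e2 : (N f) (r t) - (N h) (r t) = -((N f) t - (N h) t) := by
      rw [← h4, ← h2]; exact h6
    have e3 : (2:ℝ) • ((N f) (r t)) = (2:ℝ) • ((N h) t) := by
      have : ((N f) (r t) + (N h) (r t)) + ((N f) (r t) - (N h) (r t))
          = ((N f) t + (N h) t) + (-((N f) t - (N h) t)) := by rw [e1, e2]
      rw [two_smul, two_smul]
      calc (N f) (r t) + (N f) (r t)
          = ((N f) (r t) + (N h) (r t)) + ((N f) (r t) - (N h) (r t)) := by abel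
        _ = ((N f) t + (N h) t) + (-((N f) t - (N h) t)) := this
        _ = (N h) t + (N h) t := by abel
    exact smul_right_injective E two_ne_zero e3
  have key' : ∀ᵐ t ∂μ, (N f) t = (N h) (r t) := by
    filter_upwards [pull key] with t h1
    rw [← h1, hrr]
  -- conclusion
  filter_upwards [hNf_supp, key', pull hNh_supp] with t h1 h2 h3 ht
  simp only [mem_Icc] at ht
  by_cases hta : a ≤ t
  · -- then t > b
    have htb : b < t := by
      by_contra hc
      exact ht ⟨hta, by linarith⟩
    rw [h2]
    refine h3 ?_
    simp only [mem_Icc, hrdef]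
    intro ⟨h4, h5⟩
    linarith
  · refine h1 ?_
    simp only [mem_Icc]
    intro ⟨h4, h5⟩
    exact hta h4
end

section
/- Let E be a Hilbert space, T > 0, and F = L²([0,2T]; E). If a compact operator N : F → F preserves the even and odd subspaces (with respect to reflection about t = T) and satisfies N F^{[a,2T]} ⊆ F^{[a,2T]} for all 0 ≤ a ≤ 2T, then N = 0. -/
open MeasureTheory Set

local notation "⟪" x ", " y "⟫" => @inner ℝ _ _ x y

lemma lp_coeFn_sum {α E : Type*} [MeasurableSpace α] {μ : Measure α} [NormedAddCommGroup E]
    {ι : Type*} (s : Finset ι) (f : ι → Lp E 2 μ) :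
    ⇑(∑ i ∈ s, f i) =ᵐ[μ] fun t => ∑ i ∈ s, f i t := by
  classical
  refine Finset.induction_on s ?_ ?_
  · simp only [Finset.sum_empty]; exact Lp.coeFn_zero E 2 μ
  · intro i s' hnotmem ih
    rw [Finset.sum_insert hnotmem]
    filter_upwards [Lp.coeFn_add (f i) (∑ j ∈ s', f j), ih] with t h1 h2
    rw [h1, Pi.add_apply, h2]
    simp [Finset.sum_insert hnotmem]

lemma pythagoras {H : Type*} [NormedAddCommGroup H] [InnerProductSpace ℝ H] :
    ∀ (n : ℕ) (v : ℕ → H),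
    (∀ i j, i < n → j < n → i ≠ j → ⟪v i, v j⟫ = 0) →
    ‖∑ k ∈ Finset.range n, v k‖ ^ 2 = ∑ k ∈ Finset.range n, ‖v k‖ ^ 2 := by
  intro n
  induction n with
  | zero => simp
  | succ n ih =>
    intro v hv
    rw [Finset.sum_range_succ, Finset.sum_range_succ, norm_add_sq_real,
      ih v (fun i j hi hj hij => hv i j (hi.trans n.lt_succ_self) (hj.trans n.lt_succ_self) hij)]
    have h0 : ⟪∑ k ∈ Finset.range n, v k, v n⟫ = 0 := by
      rw [sum_inner]
      refine Finset.sum_eq_zero fun i hi => ?_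
      exact hv i n ((Finset.mem_range.1 hi).trans n.lt_succ_self) n.lt_succ_self
        (Finset.mem_range.1 hi).ne
    rw [h0]; ring

set_option maxHeartbeats 2000000 in
/-- Lemma 5 of the paper. A compact operator on
`F = L²([0,2T]; E)` which preserves the even and odd subspaces
(w.r.t. the reflection `t ↦ 2T - t`) and preserves each subspace
`F^{[a,2T]}` of functions vanishing a.e. on `[0,a]` is zero. -/
theorem stmt_1 {E : Type*} [NormedAddCommGroup E] [InnerProductSpace ℝ E] [CompleteSpace E]
    (T : ℝ) (hT : 0 < T)
    (μ : Measure ℝ) (hμ : μ = volume.restrict (Icc (0:ℝ) (2*T)))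
    (N : Lp E 2 μ →L[ℝ] Lp E 2 μ)
    (hcompact : IsCompactOperator N)
    (heven : ∀ f : Lp E 2 μ, (∀ᵐ t ∂μ, f (2*T - t) = f t) →
      (∀ᵐ t ∂μ, (N f) (2*T - t) = (N f) t))
    (hodd : ∀ f : Lp E 2 μ, (∀ᵐ t ∂μ, f (2*T - t) = - f t) →
      (∀ᵐ t ∂μ, (N f) (2*T - t) = - (N f) t))
    (hsupp : ∀ a : ℝ, 0 ≤ a → a ≤ 2*T → ∀ f : Lp E 2 μ,
      (∀ᵐ t ∂μ, t ∉ Icc a (2*T) → f t = 0) →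
      (∀ᵐ t ∂μ, t ∉ Icc a (2*T) → (N f) t = 0)) :
    N = 0 := by
  have hpre : (fun t : ℝ => 2*T - t) ⁻¹' (Icc (0:ℝ) (2*T)) = Icc (0:ℝ) (2*T) := by
    ext x
    simp only [mem_preimage, mem_Icc]
    constructor <;> (rintro ⟨h1, h2⟩; constructor <;> linarith)
  have hφ : MeasurePreserving (fun t : ℝ => 2*T - t) μ μ := by
    have h0 : MeasurePreserving (fun t : ℝ => 2*T - t) volume volume :=
      Measure.measurePreserving_sub_left volume (2*T)
    have h1 := h0.restrict_preimage (measurableSet_Icc (a := (0:ℝ)) (b := 2*T))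
    rw [hpre] at h1
    rwa [hμ]
  have qae : ∀ (p : ℝ → Prop), (∀ᵐ t ∂μ, p t) → (∀ᵐ t ∂μ, p (2*T - t)) :=
    fun p h => hφ.quasiMeasurePreserving.ae h
  set R := Lp.compMeasurePreserving (E := E) (p := 2) (fun t : ℝ => 2*T - t) hφ with hRdef
  have hR : ∀ g : Lp E 2 μ, ∀ᵐ t ∂μ, (R g) t = g (2*T - t) :=
    fun g => Lp.coeFn_compMeasurePreserving g hφ
  -- commutation
  have hcomm : ∀ f : Lp E 2 μ, N (R f) = R (N f) := by
    intro f
    set fe : Lp E 2 μ := (2⁻¹ : ℝ) • (f + R f) with hfe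
    set fo : Lp E 2 μ := (2⁻¹ : ℝ) • (f - R f) with hfo
    have hfe_coe : ∀ᵐ t ∂μ, fe t = (2⁻¹ : ℝ) • (f t + f (2*T - t)) := by
      filter_upwards [Lp.coeFn_smul (2⁻¹ : ℝ) (f + R f), Lp.coeFn_add f (R f), hR f]
        with t h1 h2 h3
      rw [hfe, h1, Pi.smul_apply, h2, Pi.add_apply, h3]
    have hfo_coe : ∀ᵐ t ∂μ, fo t = (2⁻¹ : ℝ) • (f t - f (2*T - t)) := by
      filter_upwards [Lp.coeFn_smul (2⁻¹ : ℝ) (f - R f), Lp.coeFn_sub f (R f), hR f]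
        with t h1 h2 h3
      rw [hfo, h1, Pi.smul_apply, h2, Pi.sub_apply, h3]
    have he : ∀ᵐ t ∂μ, fe (2*T - t) = fe t := by
      filter_upwards [hfe_coe, qae _ hfe_coe] with t h1 h2
      rw [h1, h2, sub_sub_cancel, add_comm]
    have ho : ∀ᵐ t ∂μ, fo (2*T - t) = - fo t := by
      filter_upwards [hfo_coe, qae _ hfo_coe] with t h1 h2
      rw [h1, h2, sub_sub_cancel, ← smul_neg, neg_sub]
    have hNe : R (N fe) = N fe := by
      refine Lp.ext ?_
      filter_upwards [hR (N fe), heven fe he] with t h1 h2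
      rw [h1, h2]
    have hNo : R (N fo) = - N fo := by
      refine Lp.ext ?_
      filter_upwards [hR (N fo), hodd fo ho, Lp.coeFn_neg (N fo)] with t h1 h2 h3
      rw [h1, h2, h3, Pi.neg_apply]
    have hsum : fe + fo = f := by rw [hfe, hfo]; module
    have hdiff : fe - fo = R f := by rw [hfe, hfo]; module
    calc N (R f) = N fe - N fo := by rw [← hdiff, map_sub]
    _ = R (N fe) + R (N fo) := by rw [hNe, hNo]; abel
    _ = R (N fe + N fo) := (map_add R _ _).symm
    _ = R (N f) := by rw [← map_add, hsum]
  -- reflected support hypothesis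
  have hsupp' : ∀ b : ℝ, 0 ≤ b → b ≤ 2*T → ∀ f : Lp E 2 μ,
      (∀ᵐ t ∂μ, t ∉ Icc 0 b → f t = 0) →
      (∀ᵐ t ∂μ, t ∉ Icc 0 b → (N f) t = 0) := by
    intro b hb0 hb2 f hf
    have step1 : ∀ᵐ t ∂μ, t ∉ Icc (2*T - b) (2*T) → (R f) t = 0 := by
      filter_upwards [hR f, qae _ hf] with t h1 h2 ht
      rw [h1]
      apply h2
      intro hmem
      rw [mem_Icc] at hmem
      exact ht (mem_Icc.2 ⟨by linarith [hmem.2], by linarith [hmem.1]⟩)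
    have step2 := hsupp (2*T - b) (by linarith) (by linarith) (R f) step1
    rw [hcomm f] at step2
    have step3 : ∀ᵐ t ∂μ, t ∉ Icc (2*T - b) (2*T) → (N f) (2*T - t) = 0 := by
      filter_upwards [hR (N f), step2] with t h1 h2 ht
      rw [← h1]; exact h2 ht
    have step4 := qae _ step3
    filter_upwards [step4] with t h4 ht
    rw [sub_sub_cancel] at h4
    apply h4
    intro hmem
    rw [mem_Icc] at hmem
    exact ht (mem_Icc.2 ⟨by linarith [hmem.2], by linarith [hmem.1]⟩)
  -- support on segments
  have hseg : ∀ a b : ℝ, 0 ≤ a → a ≤ b → b ≤ 2*T → ∀ f : Lp E 2 μ,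
      (∀ᵐ t ∂μ, t ∉ Icc a b → f t = 0) →
      (∀ᵐ t ∂μ, t ∉ Icc a b → (N f) t = 0) := by
    intro a b ha hab hb f hf
    have h1 : ∀ᵐ t ∂μ, t ∉ Icc a (2*T) → (N f) t = 0 := by
      refine hsupp a ha (by linarith) f ?_
      filter_upwards [hf] with t h ht
      exact h (fun hm => ht (Icc_subset_Icc_right hb hm))
    have h2 : ∀ᵐ t ∂μ, t ∉ Icc 0 b → (N f) t = 0 := by
      refine hsupp' b (le_trans ha hab) hb f ?_
      filter_upwards [hf] with t h ht
      exact h (fun hm => ht (Icc_subset_Icc_left ha hm))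
    filter_upwards [h1, h2] with t h1 h2 ht
    by_cases hm : t ∈ Icc a (2*T)
    · refine h2 fun hm2 => ht ?_
      rw [mem_Icc] at hm hm2 ⊢
      exact ⟨hm.1, hm2.2⟩
    · exact h1 hm
  -- basic measure facts
  have hμle : ∀ s : Set ℝ, volume s = 0 → μ s = 0 := by
    intro s hs
    refine le_antisymm ?_ zero_le
    calc μ s ≤ volume s := by rw [hμ]; exact Measure.le_iff'.1 Measure.restrict_le_self s
    _ = 0 := hs
  have haeIcc : ∀ᵐ t ∂μ, t ∈ Icc (0:ℝ) (2*T) := by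
    rw [hμ]; exact ae_restrict_mem measurableSet_Icc
  have haene : ∀ᵐ t ∂μ, t ≠ 2*T := by
    have h0 : μ {(2*T : ℝ)} = 0 := hμle _ Real.volume_singleton
    filter_upwards [measure_eq_zero_iff_ae_notMem.1 h0] with t ht
    simpa using ht
  -- suppose N ≠ 0
  by_contra hNne
  have hex0 : ∃ f0 : Lp E 2 μ, N f0 ≠ 0 := by
    by_contra h
    push_neg at h
    exact hNne (ContinuousLinearMap.ext fun f => by rw [h f]; rfl)
  obtain ⟨f0, hf0⟩ := hex0
  have hf0n : 0 < ‖f0‖ := norm_pos_iff.2 (fun h => hf0 (by rw [h, map_zero]))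
  have hNf0n : 0 < ‖N f0‖ := norm_pos_iff.2 hf0
  set r : ℝ := ‖N f0‖ / (2*‖f0‖) with hrdef
  have hr : 0 < r := by positivity
  have hNf0 : r * ‖f0‖ < ‖N f0‖ := by
    have h1 : r * ‖f0‖ = ‖N f0‖ / 2 := by
      rw [hrdef, div_mul_eq_mul_div, mul_div_mul_right _ _ hf0n.ne']
    rw [h1]; linarith
  -- localization
  have key : ∀ n : ℕ, ∃ (u : Lp E 2 μ) (a : ℝ), 0 ≤ a ∧ a + 2*T/((n:ℝ)+1) ≤ 2*T ∧ u ≠ 0 ∧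
      r * ‖u‖ < ‖N u‖ ∧ (∀ᵐ t ∂μ, t ∉ Icc a (a + 2*T/((n:ℝ)+1)) → (N u) t = 0) := by
    intro n
    set d : ℝ := 2*T/((n:ℝ)+1) with hddef
    have hd : 0 < d := by positivity
    have h2T : ((n:ℝ)+1)*d = 2*T := by rw [hddef]; field_simp
    set S : ℕ → Set ℝ := fun k => Ico ((k:ℝ)*d) (((k:ℝ)+1)*d) with hSdef
    have hSmeas : ∀ k, MeasurableSet (S k) := fun k => measurableSet_Ico
    set g : ℕ → Lp E 2 μ := fun k =>
      (((Lp.memLp f0).indicator (hSmeas k))).toLp ((S k).indicator ⇑f0) with hgdef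
    have hg_coe : ∀ k, ⇑(g k) =ᵐ[μ] (S k).indicator ⇑f0 := fun k => MemLp.coeFn_toLp _
    have hdisj : ∀ {j k : ℕ}, j ≠ k → ∀ {t : ℝ}, t ∈ S j → t ∈ S k → False := by
      have base : ∀ {j k : ℕ}, j < k → ∀ {t : ℝ}, t ∈ S j → t ∈ S k → False := by
        intro j k hjk t htj htk
        have hc : ((j:ℝ)+1) ≤ (k:ℝ) := by exact_mod_cast hjk
        have h1 : ((j:ℝ)+1)*d ≤ (k:ℝ)*d := mul_le_mul_of_nonneg_right hc hd.le
        rw [hSdef, mem_Ico] at htj htk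
        linarith [htj.2, htk.1]
      intro j k hjk t htj htk
      rcases hjk.lt_or_gt with h | h
      exacts [base h htj htk, base h htk htj]
    -- the decomposition of f0
    have hsum : ∑ k ∈ Finset.range (n+1), g k = f0 := by
      refine Lp.ext ?_
      have hall : ∀ᵐ t ∂μ, ∀ k ∈ Finset.range (n+1), (g k) t = (S k).indicator (⇑f0) t :=
        (Filter.eventually_all_finset _).2 fun k _ => hg_coe k
      filter_upwards [lp_coeFn_sum (Finset.range (n+1)) g, hall, haeIcc, haene]
        with t h1 h2 h3 h4
      rw [h1, Finset.sum_congr rfl h2]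
      have ht0 : 0 ≤ t := h3.1
      have ht2 : t < 2*T := lt_of_le_of_ne h3.2 h4
      set k0 : ℕ := ⌊t/d⌋₊ with hk0def
      have htd : 0 ≤ t/d := by positivity
      have hk0lt : k0 < n+1 := by
        refine Nat.floor_lt htd |>.2 ?_
        push_cast
        rw [div_lt_iff₀ hd]
        linarith [h2T]
      have htk0 : t ∈ S k0 := by
        rw [hSdef]
        constructor
        · rw [← le_div_iff₀ hd]
          exact Nat.floor_le htd
        · rw [← div_lt_iff₀ hd]
          exact Nat.lt_floor_add_one (t/d)
      rw [Finset.sum_eq_single_of_mem k0 (Finset.mem_range.2 hk0lt)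
        (fun k _ hk => indicator_of_notMem (fun hm => hdisj hk hm htk0) _)]
      exact indicator_of_mem htk0 _
    -- supports of g and N g
    have hgsupp : ∀ k : ℕ, ∀ᵐ t ∂μ, t ∉ Icc ((k:ℝ)*d) (((k:ℝ)+1)*d) → (g k) t = 0 := by
      intro k
      filter_upwards [hg_coe k] with t h ht
      rw [h]
      exact indicator_of_notMem (fun hm => ht (Ico_subset_Icc_self hm)) _
    have hNgsupp : ∀ k : ℕ, k < n+1 →
        ∀ᵐ t ∂μ, t ∉ Icc ((k:ℝ)*d) (((k:ℝ)+1)*d) → (N (g k)) t = 0 := by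
      intro k hk
      refine hseg ((k:ℝ)*d) (((k:ℝ)+1)*d) (by positivity) (by nlinarith [hd.le]) ?_ (g k) (hgsupp k)
      have hc : ((k:ℝ)+1) ≤ (n:ℝ)+1 := by exact_mod_cast hk
      calc ((k:ℝ)+1)*d ≤ ((n:ℝ)+1)*d := mul_le_mul_of_nonneg_right hc hd.le
      _ = 2*T := h2T
    -- orthogonality
    have horthg : ∀ i j, i < n+1 → j < n+1 → i ≠ j → ⟪g i, g j⟫ = 0 := by
      intro i j _ _ hij
      rw [L2.inner_def]
      rw [← integral_zero ℝ ℝ]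
      refine integral_congr_ae ?_
      filter_upwards [hg_coe i, hg_coe j] with t h1 h2
      rw [h1, h2]
      by_cases hm : t ∈ S i
      · rw [indicator_of_notMem (fun hm2 => hdisj hij hm hm2) (⇑f0), inner_zero_right]
      · rw [indicator_of_notMem hm (⇑f0), inner_zero_left]
    have horthN : ∀ i j, i < n+1 → j < n+1 → i ≠ j → ⟪N (g i), N (g j)⟫ = 0 := by
      intro i j hi hj hij
      have hnull : μ (Icc ((i:ℝ)*d) (((i:ℝ)+1)*d) ∩ Icc ((j:ℝ)*d) (((j:ℝ)+1)*d)) = 0 := by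
        refine hμle _ ?_
        rw [Icc_inter_Icc, Real.volume_Icc, ENNReal.ofReal_eq_zero]
        have hminmax : min (((i:ℝ)+1)*d) (((j:ℝ)+1)*d) ≤ max ((i:ℝ)*d) ((j:ℝ)*d) := by
          rcases hij.lt_or_gt with h | h
          · have hc : ((i:ℝ)+1) ≤ (j:ℝ) := by exact_mod_cast h
            calc min (((i:ℝ)+1)*d) (((j:ℝ)+1)*d) ≤ ((i:ℝ)+1)*d := min_le_left _ _
            _ ≤ (j:ℝ)*d := mul_le_mul_of_nonneg_right hc hd.le
            _ ≤ max ((i:ℝ)*d) ((j:ℝ)*d) := le_max_right _ _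
          · have hc : ((j:ℝ)+1) ≤ (i:ℝ) := by exact_mod_cast h
            calc min (((i:ℝ)+1)*d) (((j:ℝ)+1)*d) ≤ ((j:ℝ)+1)*d := min_le_right _ _
            _ ≤ (i:ℝ)*d := mul_le_mul_of_nonneg_right hc hd.le
            _ ≤ max ((i:ℝ)*d) ((j:ℝ)*d) := le_max_left _ _
        linarith
      rw [L2.inner_def, ← integral_zero ℝ ℝ]
      refine integral_congr_ae ?_
      filter_upwards [measure_eq_zero_iff_ae_notMem.1 hnull, hNgsupp i hi, hNgsupp j hj]
        with t h0 h1 h2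
      by_cases hm : t ∈ Icc ((i:ℝ)*d) (((i:ℝ)+1)*d)
      · rw [h2 (fun hm2 => h0 ⟨hm, hm2⟩), inner_zero_right]
      · rw [h1 hm, inner_zero_left]
    -- Pythagoras
    have hpyth1 : ‖f0‖^2 = ∑ k ∈ Finset.range (n+1), ‖g k‖^2 := by
      rw [← hsum]
      exact pythagoras (n+1) g horthg
    have hpyth2 : ‖N f0‖^2 = ∑ k ∈ Finset.range (n+1), ‖N (g k)‖^2 := by
      conv_lhs => rw [← hsum, map_sum]
      exact pythagoras (n+1) (fun k => N (g k)) horthN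
    -- extraction
    have hex : ∃ k, k < n+1 ∧ r * ‖g k‖ < ‖N (g k)‖ := by
      by_contra hcon
      push_neg at hcon
      have hle : ‖N f0‖^2 ≤ r^2 * ‖f0‖^2 := by
        rw [hpyth1, hpyth2, Finset.mul_sum]
        refine Finset.sum_le_sum fun k hk => ?_
        have h := hcon k (Finset.mem_range.1 hk)
        nlinarith [norm_nonneg (N (g k)), norm_nonneg (g k), hr.le]
      nlinarith [mul_pos hr hf0n, hNf0, hle]
    obtain ⟨k, hk, hlt⟩ := hex
    have hgne : g k ≠ 0 := by
      intro h
      rw [h, map_zero] at hlt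
      simp at hlt
    refine ⟨g k, (k:ℝ)*d, by positivity, ?_, hgne, hlt, ?_⟩
    · have hc : ((k:ℝ)+1) ≤ (n:ℝ)+1 := by exact_mod_cast hk
      calc (k:ℝ)*d + d = ((k:ℝ)+1)*d := by ring
      _ ≤ ((n:ℝ)+1)*d := mul_le_mul_of_nonneg_right hc hd.le
      _ = 2*T := h2T
    · have heq : (k:ℝ)*d + d = ((k:ℝ)+1)*d := by ring
      rw [heq]
      exact hNgsupp k hk
  -- compactness
  obtain ⟨K, hK, hKmem⟩ := hcompact
  obtain ⟨δ, hδ, hball⟩ := Metric.mem_nhds_iff.1 hKmem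
  choose u a h0a h2a hu0 hru hNusupp using key
  have hdn : ∀ n : ℕ, 0 < 2*T/((n:ℝ)+1) := fun n => by positivity
  set c : ℕ → ℝ := fun n => (δ/2) * ‖u n‖⁻¹ with hcdef
  have hun : ∀ n, 0 < ‖u n‖ := fun n => norm_pos_iff.2 (hu0 n)
  have hc : ∀ n, 0 < c n := fun n => by
    have := hun n; rw [hcdef]; positivity
  set w : ℕ → Lp E 2 μ := fun n => c n • u n with hwdef
  have hwn : ∀ n, ‖w n‖ = δ/2 := by
    intro n
    rw [hwdef]
    simp only [norm_smul, Real.norm_eq_abs, abs_of_pos (hc n), hcdef]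
    rw [abs_of_pos (hc n : 0 < δ / 2 * ‖u n‖⁻¹), mul_assoc, inv_mul_cancel₀ (hun n).ne', mul_one]
  have hNw : ∀ n, δ*r/2 ≤ ‖N (w n)‖ := by
    intro n
    have h1 : N (w n) = c n • N (u n) := by rw [hwdef]; exact map_smul N _ _
    rw [h1, norm_smul, Real.norm_eq_abs, abs_of_pos (hc n)]
    have h2 : c n * (r * ‖u n‖) ≤ c n * ‖N (u n)‖ :=
      mul_le_mul_of_nonneg_left (hru n).le (hc n).le
    have h3 : c n * (r * ‖u n‖) = δ*r/2 := by
      rw [hcdef]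
      have h4 : ‖u n‖⁻¹ * (r * ‖u n‖) = r := by
        rw [mul_comm, mul_assoc, mul_inv_cancel₀ (hun n).ne', mul_one]
      calc δ/2*‖u n‖⁻¹ * (r*‖u n‖) = δ/2 * (‖u n‖⁻¹ * (r*‖u n‖)) := by ring
      _ = δ/2 * r := by rw [h4]
      _ = δ*r/2 := by ring
    linarith
  have hNwsupp : ∀ n : ℕ, ∀ᵐ t ∂μ, t ∉ Icc (a n) (a n + 2*T/((n:ℝ)+1)) → (N (w n)) t = 0 := by
    intro n
    have h1 : N (w n) = c n • N (u n) := by rw [hwdef]; exact map_smul N _ _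
    have h2 : ⇑(N (w n)) =ᵐ[μ] c n • ⇑(N (u n)) := by
      rw [h1]; exact Lp.coeFn_smul _ _
    filter_upwards [hNusupp n, h2] with t ht h2t htm
    rw [h2t, Pi.smul_apply, ht htm, smul_zero]
  have hmemK : ∀ n, N (w n) ∈ K := by
    intro n
    apply hball
    rw [mem_ball_zero_iff, hwn n]
    linarith
  obtain ⟨hlim, _, φ1, hφ1, hconv1⟩ := hK.tendsto_subseq hmemK
  have haIcc : ∀ n : ℕ, (a ∘ φ1) n ∈ Icc (0:ℝ) (2*T) := by
    intro n
    simp only [Function.comp_apply]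
    exact mem_Icc.2 ⟨h0a _, by linarith [h2a (φ1 n), hdn (φ1 n)]⟩
  obtain ⟨p, _, ψ, hψ, hconv2⟩ :=
    (isCompact_Icc (a := (0:ℝ)) (b := 2*T)).tendsto_subseq haIcc
  set σ : ℕ → ℕ := φ1 ∘ ψ with hσdef
  have hσ : StrictMono σ := hφ1.comp hψ
  have hσge : ∀ n, n ≤ σ n := fun n => hσ.le_apply
  have hvconv : Filter.Tendsto (fun n => N (w (σ n))) Filter.atTop (nhds hlim) :=
    hconv1.comp hψ.tendsto_atTop
  have haconv : Filter.Tendsto (fun n => a (σ n)) Filter.atTop (nhds p) := hconv2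
  have hnormh : δ*r/2 ≤ ‖hlim‖ :=
    ge_of_tendsto' hvconv.norm (fun n => hNw (σ n))
  -- hlim vanishes a.e. away from p
  have hzero : ∀ m : ℕ, ∀ᵐ t ∂μ,
      t ∉ Icc (p - 1/((m:ℝ)+1)) (p + 1/((m:ℝ)+1)) → hlim t = 0 := by
    intro m
    set ε : ℝ := 1/((m:ℝ)+1) with hεdef
    have hε : 0 < ε := by positivity
    set A : Set ℝ := (Icc (p-ε) (p+ε))ᶜ with hAdef
    have hsub : ∀ᶠ n in Filter.atTop, ∀ᵐ t ∂μ, t ∈ A → (N (w (σ n))) t = 0 := by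
      have ev1 : ∀ᶠ n in Filter.atTop, |a (σ n) - p| < ε/2 := by
        have := Metric.tendsto_atTop.1 haconv (ε/2) (half_pos hε)
        obtain ⟨M, hM⟩ := this
        refine Filter.eventually_atTop.2 ⟨M, fun n hn => ?_⟩
        simpa [Real.dist_eq] using hM n hn
      have ev2 : ∀ᶠ n in Filter.atTop, 2*T/((σ n : ℝ)+1) ≤ ε/2 := by
        obtain ⟨M, hM⟩ := exists_nat_gt (2*(2*T)/ε)
        have hM2 : 2*T/((M:ℝ)+1) ≤ ε/2 := by
          rw [div_le_iff₀ (by positivity)]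
          have := (div_lt_iff₀ hε).1 hM
          nlinarith
        refine Filter.eventually_atTop.2 ⟨M, fun n hn => ?_⟩
        refine le_trans ?_ hM2
        have h1 : (M:ℝ)+1 ≤ (σ n : ℝ)+1 := by
          have : M ≤ σ n := le_trans hn (hσge n)
          exact_mod_cast Nat.add_le_add_right this 1
        exact div_le_div_of_nonneg_left (by linarith) (by positivity) h1
      filter_upwards [ev1, ev2] with n h1 h2
      filter_upwards [hNwsupp (σ n)] with t ht htA
      refine ht ?_
      intro hm
      rw [mem_Icc] at hm
      have habs := abs_lt.1 h1
      refine htA (mem_Icc.2 ⟨?_, ?_⟩)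
      · linarith [hm.1]
      · linarith [hm.2, h2]
    have hnorm0 : Filter.Tendsto (fun n => eLpNorm (⇑(N (w (σ n)) - hlim)) 2 μ)
        Filter.atTop (nhds 0) := by
      have heq : ∀ n, eLpNorm (⇑(N (w (σ n)) - hlim)) 2 μ = ENNReal.ofReal ‖N (w (σ n)) - hlim‖ := by
        intro n
        rw [Lp.norm_def, ENNReal.ofReal_toReal (Lp.eLpNorm_ne_top _)]
      simp only [heq]
      have h1 : Filter.Tendsto (fun n => ‖N (w (σ n)) - hlim‖) Filter.atTop (nhds 0) := by
        have := tendsto_iff_norm_sub_tendsto_zero.1 hvconv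
        simpa using this
      have h2 := (ENNReal.continuous_ofReal.tendsto 0).comp h1
      rw [ENNReal.ofReal_zero] at h2; exact h2
    have hle0 : eLpNorm (⇑hlim) 2 (μ.restrict A) = 0 := by
      refine le_antisymm ?_ zero_le
      refine ge_of_tendsto hnorm0 ?_
      filter_upwards [hsub] with n hn
      have hz : ⇑(N (w (σ n))) =ᵐ[μ.restrict A] 0 :=
        (ae_restrict_iff' measurableSet_Icc.compl).2 hn
      have hcoe : ⇑(N (w (σ n)) - hlim) =ᵐ[μ.restrict A]
          (fun t => (N (w (σ n))) t - hlim t) :=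
        ae_restrict_of_ae (Lp.coeFn_sub _ _)
      have hcongr : ⇑(N (w (σ n)) - hlim) =ᵐ[μ.restrict A] (fun t => - (hlim t)) := by
        filter_upwards [hcoe, hz] with t h1 h2
        rw [h1, h2]
        simp
      calc eLpNorm (⇑hlim) 2 (μ.restrict A)
          = eLpNorm (fun t => - (hlim t)) 2 (μ.restrict A) := by
            rw [← eLpNorm_neg]; rfl
        _ = eLpNorm (⇑(N (w (σ n)) - hlim)) 2 (μ.restrict A) :=
            (eLpNorm_congr_ae hcongr).symm
        _ ≤ eLpNorm (⇑(N (w (σ n)) - hlim)) 2 μ :=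
            eLpNorm_mono_measure _ Measure.restrict_le_self
    have hae0 : ⇑hlim =ᵐ[μ.restrict A] 0 :=
      (eLpNorm_eq_zero_iff ((Lp.aestronglyMeasurable hlim).restrict) (by norm_num)).1 hle0
    have := ae_imp_of_ae_restrict hae0
    filter_upwards [this] with t ht hnot
    exact ht (mem_compl hnot)
  -- conclude hlim = 0
  have hnep : ∀ᵐ t ∂μ, t ≠ p := by
    have h0 : μ {p} = 0 := hμle _ Real.volume_singleton
    filter_upwards [measure_eq_zero_iff_ae_notMem.1 h0] with t ht
    simpa using ht
  have haezero : ⇑hlim =ᵐ[μ] 0 := by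
    filter_upwards [ae_all_iff.2 hzero, hnep] with t h1 h2
    obtain ⟨m, hm⟩ := exists_nat_one_div_lt (abs_pos.2 (sub_ne_zero.2 h2))
    refine h1 m ?_
    intro hmem
    rw [mem_Icc] at hmem
    have h1' : -(1/((m:ℝ)+1)) ≤ t - p := by linarith [hmem.1]
    have h2' : t - p ≤ 1/((m:ℝ)+1) := by linarith [hmem.2]
    have habs : |t - p| ≤ 1/((m:ℝ)+1) := abs_le.2 ⟨h1', h2'⟩
    linarith
  have hzero' : hlim = 0 := Lp.ext (haezero.trans (Lp.coeFn_zero E 2 μ).symm)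
  rw [hzero', norm_zero] at hnormh
  nlinarith
end

section
/- Let W : F → H be bounded with Ker W = {0}, dense range, and unitary polar factor U (W = U|W|). Let G ⊆ F be a closed subspace, O := W*, P the projection in H onto the closure of WG, and P̃ the projection in F onto the closure of |W|G. Then O P W = |W| P̃ |W| as operators on F. -/
open ContinuousLinearMap

/-- With `W = U|W|` (`U` unitary, `Ker W = 0`, dense range),
`O := W*`, `P` the projection in `H` onto the closure of `WG`, and `P̃` the
projection in `F` onto the closure of `|W|G`, one has `O P W = |W| P̃ |W|`. -/
theorem stmt_8 {F H : Type*} [NormedAddCommGroup F] [InnerProductSpace ℝ F] [CompleteSpace F]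
    [NormedAddCommGroup H] [InnerProductSpace ℝ H] [CompleteSpace H]
    (W : F →L[ℝ] H) (hinj : LinearMap.ker (W : F →ₗ[ℝ] H) = ⊥) (hdense : Dense (LinearMap.range (W : F →ₗ[ℝ] H) : Set H))
    (R : F →L[ℝ] F) (hsa : IsSelfAdjoint R) (hpos : ∀ f : F, (0:ℝ) ≤ inner ℝ (R f) f)
    (hsq : R ∘L R = adjoint W ∘L W)
    (U : F ≃ₗᵢ[ℝ] H) (hU : ∀ f : F, U (R f) = W f)
    (G : Submodule ℝ F) (hG : IsClosed (G : Set F))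
    (O : H →L[ℝ] F) (hO : O = adjoint W) :
    ∀ f : F,
      O ((Submodule.orthogonalProjectionOnto ((G.map (W : F →ₗ[ℝ] H)).topologicalClosure) (W f) : H))
        = R ((Submodule.orthogonalProjectionOnto ((G.map (R : F →ₗ[ℝ] F)).topologicalClosure) (R f) : F)) := by
  intro f
  set T := (G.map (R : F →ₗ[ℝ] F)).topologicalClosure with hT
  have hmap : (G.map (W : F →ₗ[ℝ] H)) = (G.map (R : F →ₗ[ℝ] F)).map
      (U.toLinearEquiv : F →ₗ[ℝ] H) := by
    rw [← Submodule.map_comp]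
    congr 1
    ext x
    exact (hU x).symm
  have hclos : (G.map (W : F →ₗ[ℝ] H)).topologicalClosure =
      T.map (U.toLinearEquiv : F →ₗ[ℝ] H) := by
    apply SetLike.coe_injective
    rw [hmap]
    show closure ((U.toLinearEquiv : F →ₗ[ℝ] H) '' (G.map (R : F →ₗ[ℝ] F)))
      = (U.toLinearEquiv : F →ₗ[ℝ] H) '' closure ((G.map (R : F →ₗ[ℝ] F) : Set F))
    exact (U.toHomeomorph.image_closure _).symm
  have hcongr : ∀ (p p' : Submodule ℝ H) (h : p = p') [p.HasOrthogonalProjection]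
      [p'.HasOrthogonalProjection] (x : H),
      (Submodule.orthogonalProjectionOnto p x : H) = Submodule.orthogonalProjectionOnto p' x := by
    rintro p p' rfl _ _ x; rfl
  rw [hcongr _ _ hclos (W f)]
  have hproj : (Submodule.orthogonalProjectionOnto (T.map (U.toLinearEquiv : F →ₗ[ℝ] H)) (W f) : H)
      = U (Submodule.orthogonalProjectionOnto T (R f) : F) := by
    show (T.map (U.toLinearEquiv : F →ₗ[ℝ] H)).starProjection (W f) = U (T.starProjection (R f))
    rw [Submodule.starProjection_map_apply]
    congr 1
    have : U.symm (W f) = R f := by rw [← hU f]; exact U.symm_apply_apply _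
    rw [this]
  rw [hproj, hO]
  set q := (Submodule.orthogonalProjectionOnto T (R f) : F)
  apply ext_inner_right ℝ
  intro v
  rw [adjoint_inner_left]
  rw [← hU v, U.inner_map_map]
  rw [← ContinuousLinearMap.adjoint_inner_left R, hsa.adjoint_eq]
end
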